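/- Suppose κ̂²(S₀) := min{ s₀·‖Xb‖₂²/n : ‖b_{S₀}‖₁ − ‖b_{−S₀}‖₁ = 1 } > 0, let b* attain this minimum and z*_j = sign(b*_j) for j ∈ S₀. If β⁰ (with support S₀, |S₀| = s₀) satisfies z*_j β⁰_j > z*_j b*_j · s₀ λ* / (n κ̂²(S₀)) for all j ∈ S₀, then there exists β* solving the noiseless Lasso KKT conditions X^T X(β* − β⁰) + λ* ζ* = 0 with ζ* ∈ ∂‖β*‖₁, such that ‖X(β* − β⁰)‖₂² = s₀ λ*² / (n κ̂²(S₀)). -/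

import Mathlib

/-!
By homogeneity, `b*` minimises `qf X b / (‖b_S‖₁ - ‖b_{-S}‖₁)²` wherever the denominator is
positive. Moving one coordinate of `b*` at a time then gives the first-order condition
`XᵀX b* ∈ qf X b* • ∂(‖b_S‖₁ - ‖b_{-S}‖₁)(b*)`. Hence `β* = β⁰ - (λ / qf X b*) • b*` and
`ζ* = XᵀX b* / qf X b*` satisfy the KKT equation, and `ζ*` is a subgradient of `‖·‖₁` at `β*`:
on `S₀` the signal condition makes `β*` keep the sign of `b*`, while off `S₀` we have
`β* = -(λ / qf X b*) • b*`, whose sign is the one `ζ*` carries there. Finally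
`qf X (β* - β⁰) = λ² / qf X b*`, which is `s₀ λ² / (n κ̂²(S₀))`.
-/

open Finset

noncomputable def l1 {p : ℕ} (b : Fin p → ℝ) : ℝ := ∑ j, |b j|

def restr {p : ℕ} (S : Finset (Fin p)) (b : Fin p → ℝ) : Fin p → ℝ :=
  fun j => if j ∈ S then b j else 0

noncomputable def qf {n p : ℕ} (X : Matrix (Fin n) (Fin p) ℝ) (b : Fin p → ℝ) : ℝ :=
  ∑ i, (X.mulVec b i) ^ 2

open Matrix

open Filter Topology in
lemma le_of_forall_mul_le_mul_add_sq {a b c δ : ℝ} (hδ : 0 < δ)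
    (h : ∀ ε ∈ Set.Ioo 0 δ, a * ε ≤ b * ε + c * ε ^ 2) : a ≤ b := by
  have hlim : Tendsto (fun ε => b + c * ε) (𝓝[>] 0) (𝓝 b) := by
    have hcont : Continuous fun ε : ℝ => b + c * ε := by fun_prop
    simpa using (hcont.tendsto 0).mono_left nhdsWithin_le_nhds
  refine ge_of_tendsto hlim ?_
  filter_upwards [Ioo_mem_nhdsGT hδ] with ε hε
  have := h ε hε
  nlinarith [hε.1]

lemma abs_le_of_forall_abs_lt {a b c δ : ℝ} (hδ : 0 < δ)
    (h : ∀ ε, |ε| < δ → a * ε ≤ b * |ε| + c * ε ^ 2) : |a| ≤ b := by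
  refine abs_le.2 ⟨?_, ?_⟩
  · have : -a ≤ b := le_of_forall_mul_le_mul_add_sq hδ fun ε hε => by
      have := h (-ε) (by rw [abs_neg, abs_of_pos hε.1]; exact hε.2)
      rw [abs_neg, abs_of_pos hε.1] at this
      linarith
    linarith
  · exact le_of_forall_mul_le_mul_add_sq hδ fun ε hε => by
      simpa [abs_of_pos hε.1] using h ε (by rw [abs_of_pos hε.1]; exact hε.2)

lemma abs_add_of_abs_lt {x ε : ℝ} (h : |ε| < |x|) : |x + ε| = |x| + Real.sign x * ε := by
  rcases lt_trichotomy x 0 with hx | rfl | hx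
  · rw [abs_of_neg hx] at h ⊢
    rw [Real.sign_of_neg hx, abs_of_neg (by linarith [le_abs_self ε])]; ring
  · simp at h; linarith [abs_nonneg ε]
  · rw [abs_of_pos hx] at h ⊢
    rw [Real.sign_of_pos hx, abs_of_pos (by linarith [neg_abs_le ε])]; ring

lemma mul_eq_abs_of_eq_sign {z x : ℝ} (h : x ≠ 0 → z = Real.sign x) : z * x = |x| := by
  rcases eq_or_ne x 0 with rfl | hx
  · simp
  · rw [h hx]
    rcases hx.lt_or_gt with hx | hx
    · rw [Real.sign_of_neg hx, abs_of_neg hx]; ring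
    · rw [Real.sign_of_pos hx, abs_of_pos hx]; ring

lemma sign_eq_of_pos_mul {r x : ℝ} (h : 0 < Real.sign r * x) : Real.sign x = Real.sign r := by
  rcases Real.sign_apply_eq r with hr | hr | hr <;> rw [hr] at h ⊢
  · exact Real.sign_of_neg (by linarith)
  · simp at h
  · exact Real.sign_of_pos (by linarith)

section QuadraticForm
variable {n p : ℕ} (X : Matrix (Fin n) (Fin p) ℝ)

lemma qf_eq_dotProduct (b : Fin p → ℝ) : qf X b = X *ᵥ b ⬝ᵥ X *ᵥ b := by
  simp only [qf, dotProduct, sq]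

lemma qf_nonneg (b : Fin p → ℝ) : 0 ≤ qf X b :=
  sum_nonneg fun _ _ => sq_nonneg _

lemma qf_smul (c : ℝ) (b : Fin p → ℝ) : qf X (c • b) = c ^ 2 * qf X b := by
  simp only [qf_eq_dotProduct, mulVec_smul, smul_dotProduct, dotProduct_smul, smul_eq_mul]
  ring

lemma qf_add (b v : Fin p → ℝ) :
    qf X (b + v) = qf X b + 2 * ((Xᵀ * X) *ᵥ b ⬝ᵥ v) + qf X v := by
  have hcross : X *ᵥ b ⬝ᵥ X *ᵥ v = (Xᵀ * X) *ᵥ b ⬝ᵥ v := by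
    rw [dotProduct_mulVec, ← mulVec_transpose, mulVec_mulVec]
  simp only [qf_eq_dotProduct, mulVec_add, add_dotProduct, dotProduct_add,
    dotProduct_comm (X *ᵥ v) (X *ᵥ b), hcross]
  ring

lemma qf_add_single (b : Fin p → ℝ) (j : Fin p) (ε : ℝ) :
    qf X (b + Pi.single j ε) =
      qf X b + 2 * ε * ((Xᵀ * X) *ᵥ b) j + ε ^ 2 * qf X (Pi.single j 1) := by
  rw [qf_add, dotProduct_single, ← qf_smul, ← Pi.single_smul, smul_eq_mul, mul_one]
  ring

end QuadraticForm

noncomputable def l1Gap {p : ℕ} (S : Finset (Fin p)) (b : Fin p → ℝ) : ℝ :=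
  l1 (restr S b) - l1 (restr Sᶜ b)

def signOn {p : ℕ} (S : Finset (Fin p)) (j : Fin p) : ℝ := if j ∈ S then 1 else -1

section L1Gap
variable {p : ℕ} (S : Finset (Fin p))

lemma l1Gap_eq_sum (b : Fin p → ℝ) : l1Gap S b = ∑ j, signOn S j * |b j| := by
  rw [l1Gap, l1, l1, ← sum_sub_distrib]
  refine sum_congr rfl fun j _ => ?_
  by_cases hj : j ∈ S <;> simp [restr, signOn, hj]

lemma l1Gap_smul {c : ℝ} (hc : 0 ≤ c) (b : Fin p → ℝ) : l1Gap S (c • b) = c * l1Gap S b := by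
  simp only [l1Gap_eq_sum, mul_sum, Pi.smul_apply, smul_eq_mul, abs_mul, abs_of_nonneg hc]
  exact sum_congr rfl fun _ _ => by ring

lemma l1Gap_add_single (b : Fin p → ℝ) (j : Fin p) (ε : ℝ) :
    l1Gap S (b + Pi.single j ε) = l1Gap S b + signOn S j * (|b j + ε| - |b j|) := by
  have hterm : ∀ k, signOn S k * |(b + Pi.single j ε : Fin p → ℝ) k| =
      signOn S k * |b k| + if k = j then signOn S j * (|b j + ε| - |b j|) else 0 := by
    intro k
    rcases eq_or_ne k j with rfl | hk
    · simp only [Pi.add_apply, Pi.single_eq_same, if_true]; ring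
    · simp [hk]
  simp only [l1Gap_eq_sum, hterm, sum_add_distrib, sum_ite_eq', mem_univ, if_true]

lemma abs_signOn (j : Fin p) : |signOn S j| = 1 := by
  unfold signOn; split_ifs <;> simp

end L1Gap

section Optimality
variable {n p : ℕ} {X : Matrix (Fin n) (Fin p) ℝ} {S : Finset (Fin p)} {b : Fin p → ℝ}

lemma qf_mul_sq_l1Gap_le (hmin : IsMinOn (qf X) {v | l1Gap S v = 1} b) {v : Fin p → ℝ}
    (hv : 0 < l1Gap S v) : qf X b * l1Gap S v ^ 2 ≤ qf X v := by
  have hscaled : l1Gap S ((l1Gap S v)⁻¹ • v) = 1 := by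
    rw [l1Gap_smul S (inv_nonneg.2 hv.le), inv_mul_cancel₀ hv.ne']
  have := isMinOn_iff.1 hmin _ hscaled
  rw [qf_smul, inv_pow] at this
  rwa [le_inv_mul_iff₀ (by positivity), mul_comm] at this

lemma qf_mul_sq_le_qf_add_single (hcon : l1Gap S b = 1)
    (hmin : IsMinOn (qf X) {v | l1Gap S v = 1} b) (j : Fin p) {ε : ℝ} (hε : |ε| < 1) :
    qf X b * (1 + signOn S j * (|b j + ε| - |b j|)) ^ 2 ≤
      qf X b + 2 * ε * ((Xᵀ * X) *ᵥ b) j + ε ^ 2 * qf X (Pi.single j 1) := by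
  have hstep : |signOn S j * (|b j + ε| - |b j|)| < 1 := by
    rw [abs_mul, abs_signOn, one_mul]
    exact (abs_abs_sub_abs_le_abs_sub _ _).trans_lt (by simpa using hε)
  have hgap := l1Gap_add_single S b j ε
  rw [hcon] at hgap
  rw [← hgap, ← qf_add_single]
  refine qf_mul_sq_l1Gap_le hmin ?_
  rw [hgap]
  linarith [neg_abs_le (signOn S j * (|b j + ε| - |b j|))]

lemma gram_mulVec_apply_eq_of_ne_zero (hcon : l1Gap S b = 1)
    (hmin : IsMinOn (qf X) {v | l1Gap S v = 1} b) {j : Fin p} (hj : b j ≠ 0) :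
    ((Xᵀ * X) *ᵥ b) j = qf X b * (signOn S j * Real.sign (b j)) := by
  set u := signOn S j * Real.sign (b j)
  have hu : u ^ 2 = 1 := by
    rw [← sq_abs, abs_mul, abs_signOn, one_mul]
    rcases Real.sign_apply_eq_of_ne_zero _ hj with h | h <;> simp [h]
  have hδ : 0 < min 1 |b j| := lt_min one_pos (abs_pos.2 hj)
  have key := abs_le_of_forall_abs_lt (a := 2 * (qf X b * u - ((Xᵀ * X) *ᵥ b) j)) (b := 0)
    (c := qf X (Pi.single j 1) - qf X b) hδ fun ε hε => by
      have h := qf_mul_sq_le_qf_add_single hcon hmin j (hε.trans_le (min_le_left _ _))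
      rw [abs_add_of_abs_lt (hε.trans_le (min_le_right _ _)), add_sub_cancel_left,
        ← mul_assoc] at h
      linear_combination h - qf X b * ε ^ 2 * hu
  linarith [abs_nonpos_iff.1 key]

lemma abs_gram_mulVec_apply_le_of_eq_zero (hcon : l1Gap S b = 1)
    (hmin : IsMinOn (qf X) {v | l1Gap S v = 1} b) {j : Fin p} (hjS : j ∉ S) (hj : b j = 0) :
    |((Xᵀ * X) *ᵥ b) j| ≤ qf X b := by
  have key := abs_le_of_forall_abs_lt (a := -2 * ((Xᵀ * X) *ᵥ b) j) (b := 2 * qf X b)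
    (c := qf X (Pi.single j 1) - qf X b) one_pos fun ε hε => by
      have h := qf_mul_sq_le_qf_add_single hcon hmin j hε
      rw [hj, zero_add, abs_zero, sub_zero, signOn, if_neg hjS, ← sq_abs ε] at h
      rw [← sq_abs ε]
      linear_combination h
  rw [abs_mul, abs_neg, abs_two] at key
  linarith

theorem exists_kkt_of_isMinOn {lam : ℝ} (hlam : 0 < lam) {beta0 : Fin p → ℝ}
    (hsupp : ∀ j ∉ S, beta0 j = 0) (hcon : l1Gap S b = 1)
    (hmin : IsMinOn (qf X) {v | l1Gap S v = 1} b) (hQ : 0 < qf X b)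
    (hbeta : ∀ j ∈ S, Real.sign (b j) * (lam / qf X b * b j) < Real.sign (b j) * beta0 j) :
    ∃ betastar zeta : Fin p → ℝ,
      (∀ j, ((Xᵀ * X) *ᵥ (betastar - beta0)) j + lam * zeta j = 0) ∧
      (∀ j, |zeta j| ≤ 1) ∧
      ∑ j, zeta j * betastar j = l1 betastar ∧
      qf X (betastar - beta0) = lam ^ 2 / qf X b := by
  have ht : 0 < lam / qf X b := div_pos hlam hQ
  have hb_ne : ∀ j ∈ S, b j ≠ 0 := fun j hj h0 => by simpa [h0] using hbeta j hj
  have hzeta : ∀ j, b j ≠ 0 →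
      (qf X b)⁻¹ * ((Xᵀ * X) *ᵥ b) j = signOn S j * Real.sign (b j) := by
    intro j hj
    rw [gram_mulVec_apply_eq_of_ne_zero hcon hmin hj, inv_mul_cancel_left₀ hQ.ne']
  have hshift : beta0 - (lam / qf X b) • b - beta0 = (-(lam / qf X b)) • b := by
    rw [sub_sub_cancel_left, neg_smul]
  refine ⟨beta0 - (lam / qf X b) • b, (qf X b)⁻¹ • ((Xᵀ * X) *ᵥ b),
    fun j => ?_, fun j => ?_, ?_, ?_⟩
  · rw [hshift, mulVec_smul, Pi.smul_apply, Pi.smul_apply, smul_eq_mul, smul_eq_mul]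
    field_simp
    ring
  · rw [Pi.smul_apply, smul_eq_mul]
    by_cases hj : b j = 0
    · have hjS : j ∉ S := fun hjS => hb_ne j hjS hj
      rw [abs_mul, abs_inv, abs_of_pos hQ, inv_mul_le_one₀ hQ]
      exact abs_gram_mulVec_apply_le_of_eq_zero hcon hmin hjS hj
    · rw [hzeta j hj, abs_mul, abs_signOn, one_mul]
      rcases Real.sign_apply_eq_of_ne_zero _ hj with h | h <;> simp [h]
  · refine sum_congr rfl fun j _ => mul_eq_abs_of_eq_sign fun hβ => ?_
    simp only [Pi.sub_apply, Pi.smul_apply, smul_eq_mul] at hβ ⊢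
    by_cases hjS : j ∈ S
    · rw [hzeta j (hb_ne j hjS), signOn, if_pos hjS, one_mul]
      exact (sign_eq_of_pos_mul (by linarith [hbeta j hjS])).symm
    · have hj : b j ≠ 0 := fun h0 => hβ (by simp [hsupp j hjS, h0])
      have hpos : 0 < Real.sign (b j) * (lam / qf X b * b j) := by
        rw [mul_left_comm]
        exact mul_pos ht (Real.sign_mul_pos_of_ne_zero _ hj)
      rw [hzeta j hj, signOn, if_neg hjS, hsupp j hjS, zero_sub, Real.sign_neg, neg_one_mul,
        sign_eq_of_pos_mul hpos]
  · rw [hshift, qf_smul]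
    field_simp

end Optimality

theorem stmt7 {n p : ℕ} (X : Matrix (Fin n) (Fin p) ℝ)
    (lam : ℝ) (hlam : 0 < lam)
    (beta0 : Fin p → ℝ) (S0 : Finset (Fin p))
    (hS0 : ∀ j, j ∈ S0 ↔ beta0 j ≠ 0)
    (bstar : Fin p → ℝ)
    (hcon : l1 (restr S0 bstar) - l1 (restr S0ᶜ bstar) = 1)
    (hmin : ∀ b : Fin p → ℝ, l1 (restr S0 b) - l1 (restr S0ᶜ b) = 1 →
      qf X bstar ≤ qf X b)
    (hk : 0 < (S0.card : ℝ) * qf X bstar / n)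
    (hbeta : ∀ j ∈ S0,
      Real.sign (bstar j) * beta0 j >
        Real.sign (bstar j) * bstar j * (S0.card : ℝ) * lam /
          ((n : ℝ) * ((S0.card : ℝ) * qf X bstar / n))) :
    ∃ betastar zeta : Fin p → ℝ,
      (∀ j, ((X.transpose * X).mulVec (betastar - beta0)) j + lam * zeta j = 0) ∧
      (∀ j, |zeta j| ≤ 1) ∧
      (∑ j, zeta j * betastar j) = l1 betastar ∧
      qf X (betastar - beta0) =
        (S0.card : ℝ) * lam ^ 2 / ((n : ℝ) * ((S0.card : ℝ) * qf X bstar / n)) := by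
  have hn : (n : ℝ) ≠ 0 := fun h => by simp [h] at hk
  have hs : (S0.card : ℝ) ≠ 0 := fun h => by simp [h] at hk
  have hQ : 0 < qf X bstar := (qf_nonneg X bstar).lt_of_ne fun h => by simp [← h] at hk
  have hden : (n : ℝ) * ((S0.card : ℝ) * qf X bstar / n) = S0.card * qf X bstar :=
    mul_div_cancel₀ _ hn
  have hsupp : ∀ j ∉ S0, beta0 j = 0 := fun j hj => not_not.1 (mt (hS0 j).2 hj)
  have hbeta' : ∀ j ∈ S0,
      Real.sign (bstar j) * (lam / qf X bstar * bstar j) < Real.sign (bstar j) * beta0 j := by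
    intro j hj
    convert hbeta j hj using 1
    rw [hden]
    field_simp
  obtain ⟨betastar, zeta, hkkt, hbound, hsub, hvalue⟩ :=
    exists_kkt_of_isMinOn hlam hsupp hcon (isMinOn_iff.2 hmin) hQ hbeta'
  refine ⟨betastar, zeta, hkkt, hbound, hsub, ?_⟩
  rw [hvalue, hden]
  field_simp
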